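/- For the cycle graph C_n with n ≥ 6 and any adjacent vertices x, y, the h-LLY–Ricci curvature equals (h'(1) − h'(0))/h(1); in particular, it is nonpositive, and strictly negative whenever h is nonlinear. -/

import Mathlib

open Filter Set Classical

noncomputable section

/-- A hypergraph: a vertex type together with a family of hyperedges. -/
structure Hypergraph' (V : Type*) where
  E : Set (Set V)

namespace Hypergraph'

variable {V : Type*}

/-- Two distinct vertices are adjacent if some hyperedge contains both. -/
def Adj (H : Hypergraph' V) (x y : V) : Prop :=
  x ≠ y ∧ ∃ e ∈ H.E, x ∈ e ∧ y ∈ e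

/-- There is a path of length `n` from `x` to `y` (each consecutive pair lies
in a common hyperedge). -/
def IsPath (H : Hypergraph' V) (x y : V) (n : ℕ) : Prop :=
  ∃ f : ℕ → V, f 0 = x ∧ f n = y ∧ ∀ i < n, ∃ e ∈ H.E, f i ∈ e ∧ f (i + 1) ∈ e

/-- The graph distance on a hypergraph: the shortest length of a path. -/
def dist (H : Hypergraph' V) (x y : V) : ℕ :=
  sInf {n | H.IsPath x y n}

def Connected (H : Hypergraph' V) : Prop := ∀ x y : V, ∃ n, H.IsPath x y n

def LocallyFinite (H : Hypergraph' V) : Prop := ∀ x : V, {y | H.Adj x y}.Finite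

/-- A hypergraph is simple if no hyperedge is contained in a different one. -/
def Simple (H : Hypergraph' V) : Prop :=
  ∀ e₁ ∈ H.E, ∀ e₂ ∈ H.E, e₁ ≠ e₂ → ¬e₁ ⊆ e₂

/-- The degree of a vertex: the number of its neighbours. -/
def degree (H : Hypergraph' V) (x : V) : ℕ := {y | H.Adj x y}.ncard

end Hypergraph'

/-- A finitely supported probability function on `V`. -/
def IsProb {V : Type*} (μ : V → ℝ) : Prop :=
  (∀ v, 0 ≤ μ v) ∧ (Function.support μ).Finite ∧ ∑' v, μ v = 1

/-- A coupling of two probability functions. -/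
def IsCoupling {V : Type*} (π : V → V → ℝ) (μ ν : V → ℝ) : Prop :=
  (∀ x y, 0 ≤ π x y) ∧ (∀ x, ∑' y, π x y = μ x) ∧ (∀ y, ∑' x, π x y = ν y)

/-- The L¹-Wasserstein distance with respect to the graph distance of `H`. -/
def W1 {V : Type*} (H : Hypergraph' V) (μ ν : V → ℝ) : ℝ :=
  sInf {c | ∃ π, IsCoupling π μ ν ∧
    c = ∑' p : V × V, (H.dist p.1 p.2 : ℝ) * π p.1 p.2}

/-- A sequence of probability measures from `μ` to `ν` each of whose increments
is supported in a single hyperedge. -/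
def WhAdmissible {V : Type*} (H : Hypergraph' V) (μ ν : V → ℝ) (I : ℕ)
    (ξ : ℕ → V → ℝ) : Prop :=
  ξ 0 = μ ∧ ξ I = ν ∧ (∀ i ≤ I, IsProb (ξ i)) ∧
    ∀ i < I, ∃ e ∈ H.E, Function.support (fun v => ξ (i + 1) v - ξ i v) ⊆ e

/-- The new transport distance `W_h`. -/
def Wh {V : Type*} (H : Hypergraph' V) (h : ℝ → ℝ) (μ ν : V → ℝ) : ℝ :=
  sInf {c | ∃ I ξ, WhAdmissible H μ ν I ξ ∧
    c = ∑ i ∈ Finset.range I, h (W1 H (ξ i) (ξ (i + 1)))}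

/-- Assumptions on the concave cost function `h`, with one-sided derivatives
`D0 = h'(0)` and `D1 = h'(1)`. -/
structure CostFn (h : ℝ → ℝ) (D0 D1 : ℝ) : Prop where
  nonneg : ∀ x ∈ Set.Icc (0 : ℝ) 1, 0 ≤ h x
  mono : MonotoneOn h (Set.Icc (0 : ℝ) 1)
  cont : ContinuousOn h (Set.Icc (0 : ℝ) 1)
  concave : ConcaveOn ℝ (Set.Icc (0 : ℝ) 1) h
  zero : h 0 = 0
  d0_pos : 0 < D0
  d0 : Filter.Tendsto (fun t => h t / t) (nhdsWithin 0 (Set.Ioi 0)) (nhds D0)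
  d1 : Filter.Tendsto (fun t => (h 1 - h t) / (1 - t))
    (nhdsWithin 1 (Set.Iio 1)) (nhds D1)

/-- The Dirac measure at a point, as a probability function. -/
def dirac {V : Type*} (x : V) : V → ℝ := fun v => if v = x then 1 else 0

/-- The `α`-lazy uniform random walk at `x`. -/
def rw {V : Type*} (H : Hypergraph' V) (α : ℝ) (x : V) : V → ℝ :=
  fun v => if v = x then α else if H.Adj x v then (1 - α) / (H.degree x) else 0

/-- The `(α,h)`-Ollivier–Ricci curvature. -/
def ORic {V : Type*} (H : Hypergraph' V) (h : ℝ → ℝ) (α : ℝ) (x y : V) : ℝ :=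
  1 - Wh H h (rw H α x) (rw H α y) / Wh H h (dirac x) (dirac y)

/-- The `h`-LLY–Ricci curvature. -/
def hLLY {V : Type*} (H : Hypergraph' V) (h : ℝ → ℝ) (x y : V) : ℝ :=
  Filter.liminf (fun α => ORic H h α x y / (1 - α)) (nhdsWithin 1 (Set.Iio 1))

end

/-- The cycle graph on `n` vertices, as a hypergraph on `ZMod n` whose
hyperedges are the pairs of consecutive vertices. -/
def cycleH (n : ℕ) : Hypergraph' (ZMod n) :=
  ⟨{e | ∃ a : ZMod n, e = {a, a + 1}}⟩

/-! On the cycle, each step of an admissible path moves mass across a single edge, so a path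
induces a net flux `g a` across every edge `{a, a + 1}`, and by concavity of `h` its cost is at
least `∑ₐ h |g a|`. When the target is the rotation of `μ` by one step, `g = μ + c` for a constant
`c`. If `μ` vanishes on at least as many vertices as it charges (for the lazy walk, which charges
three vertices, this is `n ≥ 6`), pairing each charged vertex with an empty one and using
`h (μ a) ≤ h |μ a + c| + h |c|` shows that the cost is at least `∑ₐ h (μ a)`, and moving the
atoms one edge forward attains this bound. Hence `W_h(δ_x, δ_y) = h 1` and
`W_h(m_x^α, m_y^α) = h α + 2 h ((1 - α) / 2)`, and the curvature is the limit of the resulting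
difference quotient, `h'(1) - h'(0)` divided by `h 1`. -/

open Topology

namespace CostFn

variable {h : ℝ → ℝ} {D0 D1 : ℝ}

theorem mul_le_apply_mul (hc : CostFn h D0 D1) {a p : ℝ} (hp : p ∈ Icc (0 : ℝ) 1)
    (ha : a ∈ Icc (0 : ℝ) 1) : a * h p ≤ h (a * p) := by
  have := hc.concave.2 hp (left_mem_Icc.2 zero_le_one) ha.1 (sub_nonneg.2 ha.2) (by ring)
  simpa [hc.zero] using this

theorem mul_le_apply (hc : CostFn h D0 D1) {t : ℝ} (ht : t ∈ Icc (0 : ℝ) 1) :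
    t * h 1 ≤ h t := by
  simpa using hc.mul_le_apply_mul (right_mem_Icc.2 zero_le_one) ht

theorem div_mul_le_apply (hc : CostFn h D0 D1) {s t : ℝ} (hs : 0 ≤ s) (hst : s ≤ t)
    (htpos : 0 < t) (ht : t ≤ 1) : s / t * h t ≤ h s := by
  have := hc.mul_le_apply_mul ⟨htpos.le, ht⟩ ⟨div_nonneg hs htpos.le, (div_le_one htpos).2 hst⟩
  rwa [div_mul_cancel₀ _ htpos.ne'] at this

theorem apply_le_mul (hc : CostFn h D0 D1) {t : ℝ} (ht : t ∈ Icc (0 : ℝ) 1) :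
    h t ≤ D0 * t := by
  rcases ht.1.eq_or_lt with rfl | htpos
  · simp [hc.zero]
  have hslope : ∀ᶠ s in 𝓝[>] 0, h t / t ≤ h s / s := by
    filter_upwards [Ioo_mem_nhdsGT htpos] with s hs
    rw [div_le_div_iff₀ htpos hs.1]
    have := hc.div_mul_le_apply hs.1.le hs.2.le htpos ht.2
    rw [div_mul_eq_mul_div, div_le_iff₀ htpos] at this
    linarith
  have := ge_of_tendsto hc.d0 hslope
  rwa [div_le_iff₀ htpos] at this

theorem apply_one_le_D0 (hc : CostFn h D0 D1) : h 1 ≤ D0 := by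
  simpa using hc.apply_le_mul (right_mem_Icc.2 zero_le_one)

theorem D1_le_apply_one (hc : CostFn h D0 D1) : D1 ≤ h 1 := by
  refine le_of_tendsto hc.d1 ?_
  filter_upwards [Ioo_mem_nhdsLT one_pos] with t ht
  rw [div_le_iff₀ (sub_pos.2 ht.2)]
  nlinarith [hc.mul_le_apply ⟨ht.1.le, ht.2.le⟩]

theorem D1_le_D0 (hc : CostFn h D0 D1) : D1 ≤ D0 :=
  hc.D1_le_apply_one.trans hc.apply_one_le_D0

theorem apply_one_pos (hc : CostFn h D0 D1) : 0 < h 1 := by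
  obtain ⟨s, hs, hs01⟩ := ((hc.d0.eventually (lt_mem_nhds (half_lt_self hc.d0_pos))).and
    (Ioo_mem_nhdsGT one_pos)).exists
  have hpos : 0 < h s := by
    have := (half_pos hc.d0_pos).trans hs
    rwa [div_pos_iff_of_pos_right hs01.1] at this
  exact hpos.trans_le (hc.mono ⟨hs01.1.le, hs01.2.le⟩ (right_mem_Icc.2 zero_le_one) hs01.2.le)

theorem eq_mul_of_D0_le_D1 (hc : CostFn h D0 D1) (hD : D0 ≤ D1) :
    ∀ t ∈ Icc (0 : ℝ) 1, h t = h 1 * t := by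
  have hD0 : D0 = h 1 := le_antisymm (hD.trans hc.D1_le_apply_one) hc.apply_one_le_D0
  intro t ht
  have := hc.apply_le_mul ht
  rw [hD0] at this
  linarith [hc.mul_le_apply ht]

theorem apply_le_sum_of_le_sum (hc : CostFn h D0 D1) {ι : Type*} (s : Finset ι) {t : ι → ℝ}
    (ht : ∀ i ∈ s, t i ∈ Icc (0 : ℝ) 1) {r : ℝ} (hr : r ∈ Icc (0 : ℝ) 1)
    (hrt : r ≤ ∑ i ∈ s, t i) : h r ≤ ∑ i ∈ s, h (t i) := by
  have hnonneg : ∀ i ∈ s, 0 ≤ h (t i) := fun i hi => hc.nonneg _ (ht i hi)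
  by_cases hbig : ∃ i ∈ s, r ≤ t i
  · obtain ⟨i, hi, hri⟩ := hbig
    exact (hc.mono hr (ht i hi) hri).trans (Finset.single_le_sum hnonneg hi)
  push Not at hbig
  rcases hr.1.eq_or_lt with rfl | hrpos
  · simpa [hc.zero] using Finset.sum_nonneg hnonneg
  -- concavity: each `h (t i)` lies above the chord through `0` and `(r, h r)`
  calc h r ≤ h r / r * ∑ i ∈ s, t i := by
        rw [div_mul_eq_mul_div, le_div_iff₀ hrpos]
        exact mul_le_mul_of_nonneg_left hrt (hc.nonneg _ hr)
    _ = ∑ i ∈ s, t i / r * h r := by rw [Finset.mul_sum]; congr 1; ext; ring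
    _ ≤ ∑ i ∈ s, h (t i) := Finset.sum_le_sum fun i hi =>
        hc.div_mul_le_apply (ht i hi).1 (hbig i hi).le hrpos hr.2

theorem apply_le_add_min_abs (hc : CostFn h D0 D1) {a : ℝ} (ha : a ∈ Icc (0 : ℝ) 1) (c : ℝ) :
    h a ≤ h (min |a + c| 1) + h (min |c| 1) := by
  have hle : a ≤ min |a + c| 1 + min |c| 1 := by
    rcases le_total |a + c| 1 with h1 | h1 <;> rcases le_total |c| 1 with h2 | h2 <;>
      simp only [min_eq_left, min_eq_right, h1, h2] <;>
      linarith [ha.2, abs_nonneg (a + c), abs_nonneg c, le_abs_self (a + c), neg_abs_le c]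
  simpa using hc.apply_le_sum_of_le_sum Finset.univ (t := ![min |a + c| 1, min |c| 1])
    (by simp) ha (by simpa using hle)

/-- Each support point `a` of `μ` is paired with its own zero of `μ`, and
`h (μ a) ≤ h |μ a + c| + h |c|`. -/
theorem sum_le_sum_min_abs_add (hc : CostFn h D0 D1) {α : Type*} [Fintype α] [DecidableEq α]
    {μ : α → ℝ} (hμ : ∀ a, μ a ∈ Icc (0 : ℝ) 1) {S : Finset α} (hS : ∀ a ∉ S, μ a = 0)
    (hcard : 2 * S.card ≤ Fintype.card α) (c : ℝ) :
    ∑ a, h (μ a) ≤ ∑ a, h (min |μ a + c| 1) := by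
  set m := h (min |c| 1)
  have hm : 0 ≤ m := hc.nonneg _ ⟨le_min (abs_nonneg c) zero_le_one, min_le_right _ _⟩
  have hcompl : ∑ a ∈ Sᶜ, h (min |μ a + c| 1) = (Fintype.card α - S.card) * m := by
    rw [Finset.sum_congr rfl fun a ha => by rw [hS a (Finset.mem_compl.1 ha), zero_add],
      Finset.sum_const, Finset.card_compl, nsmul_eq_mul, Nat.cast_sub (S.card_le_univ)]
  calc ∑ a, h (μ a) = ∑ a ∈ S, h (μ a) :=
        (Finset.sum_subset (Finset.subset_univ S) fun a _ ha => by rw [hS a ha, hc.zero]).symm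
    _ ≤ ∑ a ∈ S, (h (min |μ a + c| 1) + m) :=
        Finset.sum_le_sum fun a _ => hc.apply_le_add_min_abs (hμ a) c
    _ = ∑ a ∈ S, h (min |μ a + c| 1) + S.card * m := by
        rw [Finset.sum_add_distrib, Finset.sum_const, nsmul_eq_mul]
    _ ≤ ∑ a ∈ S, h (min |μ a + c| 1) + (Fintype.card α - S.card) * m := by
        gcongr
        rw [le_sub_iff_add_le]
        exact_mod_cast (by omega : S.card + S.card ≤ Fintype.card α)
    _ = ∑ a, h (min |μ a + c| 1) := by rw [← hcompl, Finset.sum_add_sum_compl]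

theorem tendsto_curvature_quotient (hc : CostFn h D0 D1) :
    Tendsto (fun α => (1 - (h α + 2 * h ((1 - α) / 2)) / h 1) / (1 - α)) (𝓝[<] 1)
      (𝓝 ((D1 - D0) / h 1)) := by
  have hhalf : Tendsto (fun α : ℝ => (1 - α) / 2) (𝓝[<] 1) (𝓝[>] 0) := by
    refine tendsto_nhdsWithin_of_tendsto_nhds_of_eventually_within _ ?_ ?_
    · have : Continuous fun α : ℝ => (1 - α) / 2 := by fun_prop
      simpa using (this.tendsto 1).mono_left nhdsWithin_le_nhds
    · filter_upwards [self_mem_nhdsWithin] with α (hα : α < 1)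
      exact half_pos (sub_pos.2 hα : (0 : ℝ) < 1 - α)
  refine ((hc.d1.sub (hc.d0.comp hhalf)).div_const (h 1)).congr' ?_
  filter_upwards [self_mem_nhdsWithin] with α (hα : α < 1)
  have h1 := hc.apply_one_pos.ne'
  have hα' : 1 - α ≠ 0 := (sub_pos.2 hα).ne'
  simp only [Function.comp_apply]
  field_simp
  ring

end CostFn

namespace Hypergraph'

variable {V : Type*} {H : Hypergraph' V}

theorem IsPath.symm {x y : V} {m : ℕ} (hp : H.IsPath x y m) : H.IsPath y x m := by
  obtain ⟨f, hf0, hfm, hstep⟩ := hp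
  refine ⟨fun i => f (m - i), by simpa using hfm, by simpa using hf0, fun i hi => ?_⟩
  obtain ⟨e, he, h1, h2⟩ := hstep (m - i - 1) (by omega)
  refine ⟨e, he, ?_, ?_⟩
  · rwa [show m - i - 1 + 1 = m - i by omega] at h2
  · simpa only [show m - (i + 1) = m - i - 1 by omega] using h1

theorem Adj.symm {x y : V} (hxy : H.Adj x y) : H.Adj y x :=
  let ⟨hne, e, he, hx, hy⟩ := hxy
  ⟨hne.symm, e, he, hy, hx⟩

theorem dist_comm (x y : V) : H.dist x y = H.dist y x := by
  simp only [dist]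
  congr 1
  ext m
  exact ⟨IsPath.symm, IsPath.symm⟩

theorem dist_self (x : V) : H.dist x x = 0 :=
  Nat.sInf_eq_zero.2 (Or.inl ⟨fun _ => x, rfl, rfl, by simp⟩)

theorem dist_le_one_of_adj {x y : V} (hxy : H.Adj x y) : H.dist x y ≤ 1 := by
  obtain ⟨-, e, he, hx, hy⟩ := hxy
  refine Nat.sInf_le ⟨fun i => if i = 0 then x else y, rfl, rfl, fun i hi => ?_⟩
  obtain rfl : i = 0 := by omega
  exact ⟨e, he, hx, hy⟩

theorem one_le_dist (hconn : H.Connected) {x y : V} (hxy : x ≠ y) : 1 ≤ H.dist x y := by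
  rw [Nat.one_le_iff_ne_zero]
  intro h0
  obtain ⟨f, hf0, hfm, -⟩ : H.IsPath x y 0 := h0 ▸ Nat.sInf_mem (hconn x y)
  exact hxy (hf0.symm.trans hfm)

end Hypergraph'

section Transport

variable {V : Type*} {H : Hypergraph' V}

noncomputable def transportCost (H : Hypergraph' V) (π : V → V → ℝ) : ℝ :=
  ∑' p : V × V, (H.dist p.1 p.2 : ℝ) * π p.1 p.2

noncomputable def pathCost (H : Hypergraph' V) (h : ℝ → ℝ) (ξ : ℕ → V → ℝ) (I : ℕ) : ℝ :=
  ∑ i ∈ Finset.range I, h (W1 H (ξ i) (ξ (i + 1)))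

theorem IsCoupling.swap {π : V → V → ℝ} {μ ν : V → ℝ} (hπ : IsCoupling π μ ν) :
    IsCoupling (fun u v => π v u) ν μ :=
  ⟨fun u v => hπ.1 v u, hπ.2.2, hπ.2.1⟩

theorem transportCost_swap (π : V → V → ℝ) :
    transportCost H (fun u v => π v u) = transportCost H π := by
  rw [transportCost, transportCost, ← (Equiv.prodComm V V).tsum_eq]
  simp [H.dist_comm]

theorem W1_comm (μ ν : V → ℝ) : W1 H μ ν = W1 H ν μ := by
  have key : ∀ μ ν : V → ℝ, ∀ c, (∃ π, IsCoupling π μ ν ∧ c = transportCost H π) →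
      ∃ π, IsCoupling π ν μ ∧ c = transportCost H π := by
    rintro μ ν c ⟨π, hπ, rfl⟩
    exact ⟨_, hπ.swap, (transportCost_swap π).symm⟩
  simp only [W1]
  congr 1
  ext c
  exact ⟨key μ ν c, key ν μ c⟩

theorem WhAdmissible.reverse {μ ν : V → ℝ} {I : ℕ} {ξ : ℕ → V → ℝ}
    (hξ : WhAdmissible H μ ν I ξ) : WhAdmissible H ν μ I (fun i => ξ (I - i)) := by
  obtain ⟨hξ0, hξI, hprob, hstep⟩ := hξ
  refine ⟨by simpa using hξI, by simpa using hξ0, fun i _ => hprob _ (by omega), fun i hi => ?_⟩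
  obtain ⟨e, he, hsub⟩ := hstep (I - i - 1) (by omega)
  refine ⟨e, he, fun v hv => hsub ?_⟩
  rw [show I - i - 1 + 1 = I - i by omega] at hsub ⊢
  simp only [show I - (i + 1) = I - i - 1 by omega] at hv
  simpa [sub_eq_zero, eq_comm] using hv

theorem pathCost_reverse (h : ℝ → ℝ) (ξ : ℕ → V → ℝ) (I : ℕ) :
    pathCost H h (fun i => ξ (I - i)) I = pathCost H h ξ I := by
  rw [pathCost, pathCost, ← Finset.sum_range_reflect]
  refine Finset.sum_congr rfl fun i hi => ?_
  rw [Finset.mem_range] at hi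
  rw [show I - (I - 1 - i) = i + 1 by omega, show I - (I - 1 - i + 1) = i by omega, W1_comm]

theorem Wh_comm (h : ℝ → ℝ) (μ ν : V → ℝ) : Wh H h μ ν = Wh H h ν μ := by
  have key : ∀ μ ν : V → ℝ, ∀ c, (∃ I ξ, WhAdmissible H μ ν I ξ ∧ c = pathCost H h ξ I) →
      ∃ I ξ, WhAdmissible H ν μ I ξ ∧ c = pathCost H h ξ I := by
    rintro μ ν c ⟨I, ξ, hξ, rfl⟩
    exact ⟨I, _, hξ.reverse, (pathCost_reverse h ξ I).symm⟩
  simp only [Wh]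
  congr 1
  ext c
  exact ⟨key μ ν c, key ν μ c⟩

end Transport

theorem dirac_eq_single {V : Type*} [DecidableEq V] (x : V) : dirac x = Pi.single x 1 := by
  funext v
  simp [dirac, Pi.single_apply]

section FiniteTransport

variable {V : Type*} [Fintype V] {H : Hypergraph' V}

theorem IsProb.sum_eq_one {μ : V → ℝ} (hμ : IsProb μ) : ∑ v, μ v = 1 := by
  rw [← tsum_fintype (L := .unconditional _)]
  exact hμ.2.2

theorem IsProb.le_one {μ : V → ℝ} (hμ : IsProb μ) (v : V) : μ v ≤ 1 :=
  hμ.sum_eq_one ▸ Finset.single_le_sum (fun w _ => hμ.1 w) (Finset.mem_univ v)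

theorem isProb_of_nonneg_of_sum_eq_one {μ : V → ℝ} (h0 : ∀ v, 0 ≤ μ v) (h1 : ∑ v, μ v = 1) :
    IsProb μ :=
  ⟨h0, Set.toFinite _, by rw [tsum_fintype]; exact h1⟩

theorem transportCost_eq_sum (π : V → V → ℝ) :
    transportCost H π = ∑ u, ∑ v, (H.dist u v : ℝ) * π u v := by
  rw [transportCost, tsum_fintype, Fintype.sum_prod_type]

namespace IsCoupling

variable {π : V → V → ℝ} {μ ν : V → ℝ}

theorem sum_right (hπ : IsCoupling π μ ν) (u : V) : ∑ v, π u v = μ u := by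
  rw [← tsum_fintype (L := .unconditional _)]
  exact hπ.2.1 u

theorem sum_left (hπ : IsCoupling π μ ν) (v : V) : ∑ u, π u v = ν v := by
  rw [← tsum_fintype (L := .unconditional _)]
  exact hπ.2.2 v

theorem transportCost_nonneg (hπ : IsCoupling π μ ν) : 0 ≤ transportCost H π := by
  rw [transportCost_eq_sum]
  exact Finset.sum_nonneg fun u _ => Finset.sum_nonneg fun v _ =>
    mul_nonneg (Nat.cast_nonneg _) (hπ.1 u v)

/-- The easy half of Kantorovich duality. -/
theorem sum_mul_sub_le_transportCost (hπ : IsCoupling π μ ν) {f : V → ℝ}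
    (hf : ∀ u v, f v - f u ≤ H.dist u v) : ∑ v, f v * (ν v - μ v) ≤ transportCost H π := by
  calc ∑ v, f v * (ν v - μ v) = ∑ u, ∑ v, (f v - f u) * π u v := by
        simp only [sub_mul, mul_sub, Finset.sum_sub_distrib]
        rw [Finset.sum_comm (f := fun u v => f v * π u v)]
        simp only [← Finset.mul_sum, hπ.sum_left, hπ.sum_right]
    _ ≤ ∑ u, ∑ v, (H.dist u v : ℝ) * π u v := by
        gcongr with u _ v _
        exacts [hπ.1 u v, hf u v]
    _ = transportCost H π := (transportCost_eq_sum π).symm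

end IsCoupling

theorem bddBelow_transportCost (μ ν : V → ℝ) :
    BddBelow {c | ∃ π, IsCoupling π μ ν ∧ c = transportCost H π} :=
  ⟨0, fun _ ⟨_, hπ, hc⟩ => hc ▸ hπ.transportCost_nonneg⟩

variable [DecidableEq V]

theorem isProb_single (x : V) : IsProb (Pi.single x 1 : V → ℝ) :=
  isProb_of_nonneg_of_sum_eq_one (Pi.single_nonneg.2 zero_le_one : (0 : V → ℝ) ≤ _) (by simp)

theorem W1_sub_single_add_single (hconn : H.Connected) {a b : V} (hab : H.Adj a b)
    {μ : V → ℝ} (hμ : ∀ v, 0 ≤ μ v) {δ : ℝ} (hδ : 0 ≤ δ) (hδa : δ ≤ μ a) :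
    W1 H μ (μ - Pi.single a δ + Pi.single b δ) = δ := by
  set ν := μ - Pi.single a δ + Pi.single b δ
  set π : V → V → ℝ := fun u v =>
    (if u = v then (μ - Pi.single a δ : V → ℝ) u else 0) + if u = a ∧ v = b then δ else 0
  have hstay : ∀ u, 0 ≤ (μ - Pi.single a δ : V → ℝ) u := fun u => by
    by_cases hu : u = a
    · subst hu; simpa using hδa
    · simpa [hu] using hμ u
  have hπ : IsCoupling π μ ν := by
    refine ⟨fun u v => add_nonneg ?_ ?_, fun u => ?_, fun v => ?_⟩
    · split_ifs
      exacts [hstay u, le_rfl]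
    · split_ifs <;> simp [hδ]
    · rw [tsum_fintype]
      by_cases hu : u = a <;> simp [π, Finset.sum_add_distrib, hu]
    · rw [tsum_fintype]
      by_cases hv : v = b <;> simp [π, ν, Finset.sum_add_distrib, hv, Pi.single_apply]
  have hcost : transportCost H π ≤ δ := by
    rw [transportCost_eq_sum]
    simp only [π, mul_add, Finset.sum_add_distrib, mul_ite, mul_zero, ite_and, Finset.sum_ite_eq,
      Finset.sum_ite_eq', Finset.mem_univ, if_true, H.dist_self, Nat.cast_zero, zero_mul,
      Finset.sum_const_zero, Finset.sum_ite_irrel, zero_add]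
    exact mul_le_of_le_one_left hδ (by exact_mod_cast H.dist_le_one_of_adj hab)
  have hlower : ∀ π', IsCoupling π' μ ν → δ ≤ transportCost H π' := fun π' hπ' => by
    refine le_of_eq_of_le ?_ (hπ'.sum_mul_sub_le_transportCost (f := Pi.single b 1) fun u v => ?_)
    · simp [ν, Pi.single_apply, hab.1.symm]
    · by_cases hv : v = b
      · by_cases hu : u = b
        · simp [hu, hv]
        · simpa [hv, hu] using H.one_le_dist hconn (hv ▸ hu)
      · simp only [Pi.single_apply, hv, if_false]
        split_ifs <;> linarith [(H.dist u v).cast_nonneg (α := ℝ)]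
  exact le_antisymm ((csInf_le (bddBelow_transportCost μ ν) ⟨π, hπ, rfl⟩).trans hcost)
    (le_csInf ⟨_, π, hπ, rfl⟩ fun _ ⟨π', hπ', hc⟩ => hc ▸ hlower π' hπ')

theorem exists_eq_sub_single_add_single {μ ν : V → ℝ} {a b : V} (hab : a ≠ b)
    (hsum : ∑ v, μ v = ∑ v, ν v) (hsupp : Function.support (fun v => ν v - μ v) ⊆ {a, b}) :
    ∃ δ, ν = μ - Pi.single a δ + Pi.single b δ := by
  have hoff : ∀ v, v ≠ a ∧ v ≠ b → ν v - μ v = 0 := fun v hv =>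
    Function.support_subset_iff'.1 hsupp v (by simpa using hv)
  have hab_sum : (ν a - μ a) + (ν b - μ b) = 0 := by
    rw [← Fintype.sum_eq_add a b hab hoff, Finset.sum_sub_distrib, hsum, sub_self]
  refine ⟨ν b - μ b, funext fun v => ?_⟩
  by_cases hva : v = a
  · subst hva
    simp only [Pi.add_apply, Pi.sub_apply, Pi.single_eq_same, Pi.single_eq_of_ne hab, add_zero]
    linarith
  by_cases hvb : v = b
  · subst hvb; simp [hva]
  · simpa [hva, hvb, sub_eq_zero] using hoff v ⟨hva, hvb⟩

theorem W1_sub_single_add_single_eq_abs (hconn : H.Connected) {a b : V} (hab : H.Adj a b)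
    {μ : V → ℝ} (hμ : ∀ v, 0 ≤ μ v) {δ : ℝ}
    (hν : ∀ v, 0 ≤ (μ - Pi.single a δ + Pi.single b δ : V → ℝ) v) :
    W1 H μ (μ - Pi.single a δ + Pi.single b δ) = |δ| := by
  rcases le_or_gt 0 δ with hδ | hδ
  · rw [abs_of_nonneg hδ]
    exact W1_sub_single_add_single hconn hab hμ hδ (by simpa [hab.1] using hν a)
  · have hswap : (μ - Pi.single a δ + Pi.single b δ : V → ℝ)
        = μ - Pi.single b (-δ) + Pi.single a (-δ) := by
      simp only [Pi.single_neg]; abel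
    rw [hswap, abs_of_neg hδ]
    exact W1_sub_single_add_single hconn hab.symm hμ (neg_nonneg.2 hδ.le)
      (by linarith [show 0 ≤ μ b + δ by simpa [hab.1.symm] using hν b])

end FiniteTransport

theorem ZMod.apply_eq_apply_zero_of_add_one {n : ℕ} [NeZero n] {β : Type*} {F : ZMod n → β}
    (hF : ∀ v, F (v + 1) = F v) (a : ZMod n) : F a = F 0 := by
  rw [← ZMod.natCast_zmod_val a]
  induction a.val with
  | zero => simp
  | succ k ih => rw [Nat.cast_succ, hF, ih]

section Cycle

variable {n : ℕ}

theorem cycleH_adj_iff [Nontrivial (ZMod n)] {u v : ZMod n} :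
    (cycleH n).Adj u v ↔ v = u + 1 ∨ v = u - 1 := by
  constructor
  · rintro ⟨hne, e, ⟨a, rfl⟩, hu, hv⟩
    simp only [Set.mem_insert_iff, Set.mem_singleton_iff] at hu hv
    rcases hu with rfl | rfl <;> rcases hv with rfl | rfl <;> simp_all
  · rintro (rfl | rfl)
    · exact ⟨by simp, _, ⟨u, rfl⟩, by simp, by simp⟩
    · exact ⟨by simp [eq_sub_iff_add_eq], _, ⟨u - 1, rfl⟩, by simp, by simp⟩

theorem cycleH_adj_add_one [Nontrivial (ZMod n)] (u : ZMod n) : (cycleH n).Adj u (u + 1) :=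
  cycleH_adj_iff.2 (Or.inl rfl)

theorem cycleH_connected [NeZero n] : (cycleH n).Connected := by
  intro x y
  refine ⟨(y - x).val, fun i => x + i, by simp, by simp, fun i _ =>
    ⟨_, ⟨x + i, rfl⟩, by simp, ?_⟩⟩
  simp [add_assoc]

theorem whAdmissible_of_moves {I : ℕ} {ξ : ℕ → ZMod n → ℝ} {e : ℕ → ZMod n} {δ : ℕ → ℝ}
    (hξ : ∀ i ≤ I, IsProb (ξ i))
    (hmove : ∀ i < I, ξ (i + 1) = ξ i - Pi.single (e i) (δ i) + Pi.single (e i + 1) (δ i)) :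
    WhAdmissible (cycleH n) (ξ 0) (ξ I) I ξ := by
  refine ⟨rfl, rfl, hξ, fun i hi => ⟨_, ⟨e i, rfl⟩, Function.support_subset_iff'.2 fun v hv => ?_⟩⟩
  simp only [Set.mem_insert_iff, Set.mem_singleton_iff, not_or] at hv
  simp [hmove i hi, hv.1, hv.2]

variable [NeZero n] [Nontrivial (ZMod n)] {h : ℝ → ℝ} {D0 D1 : ℝ}

theorem WhAdmissible.exists_step {μ ν : ZMod n → ℝ} {I : ℕ} {ξ : ℕ → ZMod n → ℝ}
    (hξ : WhAdmissible (cycleH n) μ ν I ξ) {i : ℕ} (hi : i < I) :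
    ∃ a δ, ξ (i + 1) = ξ i - Pi.single a δ + Pi.single (a + 1) δ ∧
      W1 (cycleH n) (ξ i) (ξ (i + 1)) = |δ| ∧ |δ| ≤ 1 := by
  obtain ⟨-, ⟨a, rfl⟩, hsupp⟩ := hξ.2.2.2 i hi
  have hp := hξ.2.2.1 i hi.le
  have hq := hξ.2.2.1 (i + 1) hi
  obtain ⟨δ, hδ⟩ := exists_eq_sub_single_add_single (by simp : a ≠ a + 1)
    (hp.sum_eq_one.trans hq.sum_eq_one.symm) hsupp
  have hδ_eq : δ = ξ (i + 1) (a + 1) - ξ i (a + 1) := by rw [hδ]; simp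
  refine ⟨a, δ, hδ, ?_, abs_le.2 ⟨?_, ?_⟩⟩
  · rw [hδ] at hq ⊢
    exact W1_sub_single_add_single_eq_abs cycleH_connected (cycleH_adj_add_one a) hp.1 hq.1
  · linarith [hq.1 (a + 1), hp.le_one (a + 1)]
  · linarith [hp.1 (a + 1), hq.le_one (a + 1)]

theorem WhAdmissible.pathCost_nonneg (hc : CostFn h D0 D1) {μ ν : ZMod n → ℝ} {I : ℕ}
    {ξ : ℕ → ZMod n → ℝ} (hξ : WhAdmissible (cycleH n) μ ν I ξ) :
    0 ≤ pathCost (cycleH n) h ξ I :=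
  Finset.sum_nonneg fun i hi => by
    obtain ⟨a, δ, -, hW, hδ⟩ := hξ.exists_step (Finset.mem_range.1 hi)
    exact hc.nonneg _ (hW ▸ ⟨abs_nonneg δ, hδ⟩)

theorem Wh_le_pathCost (hc : CostFn h D0 D1) {μ ν : ZMod n → ℝ} {I : ℕ}
    {ξ : ℕ → ZMod n → ℝ} (hξ : WhAdmissible (cycleH n) μ ν I ξ) :
    Wh (cycleH n) h μ ν ≤ pathCost (cycleH n) h ξ I :=
  csInf_le ⟨0, fun _ ⟨_, _, hξ', hc'⟩ => hc' ▸ hξ'.pathCost_nonneg hc⟩ ⟨I, ξ, hξ, rfl⟩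

/-- `g a` is the net mass that the path carries across the edge `{a, a + 1}`. -/
theorem WhAdmissible.exists_flux (hc : CostFn h D0 D1) {μ ν : ZMod n → ℝ} {I : ℕ}
    {ξ : ℕ → ZMod n → ℝ} (hξ : WhAdmissible (cycleH n) μ ν I ξ) :
    ∃ g : ZMod n → ℝ, (∀ v, ν (v + 1) - μ (v + 1) = g v - g (v + 1)) ∧
      ∑ a, h (min |g a| 1) ≤ pathCost (cycleH n) h ξ I := by
  have : ∀ i, ∃ a δ, i < I → ξ (i + 1) = ξ i - Pi.single a δ + Pi.single (a + 1) δ ∧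
      W1 (cycleH n) (ξ i) (ξ (i + 1)) = |δ| ∧ |δ| ≤ 1 := fun i => by
    by_cases hi : i < I
    · obtain ⟨a, δ, hstep⟩ := hξ.exists_step hi
      exact ⟨a, δ, fun _ => hstep⟩
    · exact ⟨0, 0, fun h => absurd h hi⟩
  choose e δ hstep using this
  refine ⟨fun a => ∑ i ∈ (Finset.range I).filter (e · = a), δ i, fun v => ?_, ?_⟩
  · dsimp only
    rw [← hξ.1, ← hξ.2.1, ← Finset.sum_range_sub (fun i => ξ i (v + 1)), Finset.sum_filter,
      Finset.sum_filter, ← Finset.sum_sub_distrib]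
    refine Finset.sum_congr rfl fun i hi => ?_
    rw [(hstep i (Finset.mem_range.1 hi)).1]
    simp only [Pi.add_apply, Pi.sub_apply, Pi.single_apply, add_left_inj, eq_comm (a := e i)]
    ring
  · calc ∑ a, h (min |∑ i ∈ (Finset.range I).filter (e · = a), δ i| 1)
        ≤ ∑ a, ∑ i ∈ (Finset.range I).filter (e · = a), h |δ i| :=
          Finset.sum_le_sum fun a _ => hc.apply_le_sum_of_le_sum _
            (fun i hi => ⟨abs_nonneg _,
              (hstep i (Finset.mem_range.1 (Finset.mem_filter.1 hi).1)).2.2⟩)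
            ⟨le_min (abs_nonneg _) zero_le_one, min_le_right _ _⟩
            ((min_le_left _ _).trans (Finset.abs_sum_le_sum_abs _ _))
      _ = ∑ i ∈ Finset.range I, h |δ i| := Finset.sum_fiberwise _ _ _
      _ = pathCost (cycleH n) h ξ I := Finset.sum_congr rfl fun i hi => by
          rw [(hstep i (Finset.mem_range.1 hi)).2.1]

theorem sum_le_Wh_of_rotate (hc : CostFn h D0 D1) {μ ν : ZMod n → ℝ}
    (hμ : ∀ a, μ a ∈ Icc (0 : ℝ) 1) {S : Finset (ZMod n)} (hS : ∀ a ∉ S, μ a = 0)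
    (hcard : 2 * S.card ≤ n) (hν : ∀ v, ν (v + 1) = μ v)
    (hne : ∃ I ξ, WhAdmissible (cycleH n) μ ν I ξ) :
    ∑ a, h (μ a) ≤ Wh (cycleH n) h μ ν := by
  obtain ⟨I, ξ, hξ⟩ := hne
  refine le_csInf ⟨_, I, ξ, hξ, rfl⟩ ?_
  rintro _ ⟨I, ξ, hξ, rfl⟩
  obtain ⟨g, hg, hcost⟩ := hξ.exists_flux hc
  -- `g` and `μ` have the same divergence, so they differ by a constant
  have hconst : ∀ a, g a - μ a = g 0 - μ 0 :=
    ZMod.apply_eq_apply_zero_of_add_one fun v => by linarith [hg v, hν v]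
  calc ∑ a, h (μ a) ≤ ∑ a, h (min |μ a + (g 0 - μ 0)| 1) :=
        hc.sum_le_sum_min_abs_add hμ hS (by rwa [ZMod.card]) _
    _ = ∑ a, h (min |g a| 1) :=
        Finset.sum_congr rfl fun a _ => by rw [← hconst a, add_sub_cancel]
    _ ≤ _ := hcost

theorem pathCost_eq_of_moves {I : ℕ} {ξ : ℕ → ZMod n → ℝ} {e : ℕ → ZMod n} {δ : ℕ → ℝ}
    (hξ : ∀ i ≤ I, IsProb (ξ i))
    (hmove : ∀ i < I, ξ (i + 1) = ξ i - Pi.single (e i) (δ i) + Pi.single (e i + 1) (δ i)) :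
    pathCost (cycleH n) h ξ I = ∑ i ∈ Finset.range I, h |δ i| :=
  Finset.sum_congr rfl fun i hi => by
    have hi := Finset.mem_range.1 hi
    have hq := (hξ (i + 1) hi).1
    rw [hmove i hi] at hq ⊢
    rw [W1_sub_single_add_single_eq_abs cycleH_connected (cycleH_adj_add_one _) (hξ i hi.le).1 hq]

end Cycle

section CycleCurvature

variable {n : ℕ}

theorem ZMod.two_ne_zero_of_three_le (hn : 3 ≤ n) : (2 : ZMod n) ≠ 0 := by
  intro h2
  have := congrArg ZMod.val h2
  rw [ZMod.val_zero, show (2 : ZMod n) = ((2 : ℕ) : ZMod n) by norm_cast,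
    ZMod.val_natCast_of_lt (by omega)] at this
  omega

theorem rw_cycleH (hn : 3 ≤ n) (α : ℝ) (x : ZMod n) :
    rw (cycleH n) α x =
      Pi.single x α + Pi.single (x + 1) ((1 - α) / 2) + Pi.single (x - 1) ((1 - α) / 2) := by
  have : Fact (1 < n) := ⟨by omega⟩
  have hne : x + 1 ≠ x - 1 := fun h => ZMod.two_ne_zero_of_three_le hn (by linear_combination h)
  have hdeg : (cycleH n).degree x = 2 := by
    have : {y | (cycleH n).Adj x y} = {x + 1, x - 1} := by
      ext y
      simp [cycleH_adj_iff]
    rw [Hypergraph'.degree, this, Set.ncard_pair hne]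
  funext v
  simp only [rw, hdeg, cycleH_adj_iff, Pi.add_apply, Pi.single_apply]
  by_cases h1 : v = x
  · subst h1; simp [eq_sub_iff_add_eq]
  by_cases h2 : v = x + 1
  · subst h2; simp [hne]
  by_cases h3 : v = x - 1
  · subst h3; simp [hne.symm]
  simp [h1, h2, h3]

variable [NeZero n] {h : ℝ → ℝ} {D0 D1 : ℝ}

theorem Wh_cycleH_dirac_add_one [Nontrivial (ZMod n)] (hc : CostFn h D0 D1) (x : ZMod n) :
    Wh (cycleH n) h (dirac x) (dirac (x + 1)) = h 1 := by
  rw [dirac_eq_single, dirac_eq_single]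
  let ξ : ℕ → ZMod n → ℝ := fun i => if i = 0 then Pi.single x 1 else Pi.single (x + 1) 1
  have hprob : ∀ i ≤ 1, IsProb (ξ i) := fun i _ => by
    by_cases hi : i = 0 <;> simp [ξ, hi, isProb_single]
  have hmove : ∀ i < 1, ξ (i + 1) = ξ i - Pi.single x 1 + Pi.single (x + 1) 1 := by
    intro i hi
    obtain rfl : i = 0 := by omega
    simp [ξ]
  have hadm : WhAdmissible (cycleH n) (Pi.single x 1) (Pi.single (x + 1) 1) 1 ξ :=
    whAdmissible_of_moves (e := fun _ => x) (δ := fun _ => 1) hprob hmove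
  refine le_antisymm ?_ ?_
  · simpa [pathCost_eq_of_moves hprob hmove] using Wh_le_pathCost hc hadm
  · have hcard : 2 * ({x} : Finset (ZMod n)).card ≤ n := by
      have := Fintype.one_lt_card (α := ZMod n)
      rw [ZMod.card] at this
      rw [Finset.card_singleton]
      omega
    have := sum_le_Wh_of_rotate hc (fun a => ?_) (fun a ha => ?_) hcard (fun v => ?_) ⟨1, ξ, hadm⟩
    · rwa [Fintype.sum_eq_single x fun a ha => by simp [ha, hc.zero], Pi.single_eq_same] at this
    · by_cases ha : a = x <;> simp [ha]
    · exact Pi.single_eq_of_ne (by simpa using ha) _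
    · simp [Pi.single_apply]

theorem exists_whAdmissible_rw_cycleH (hn : 3 ≤ n) {α : ℝ} (hα : α ∈ Icc (0 : ℝ) 1)
    (x : ZMod n) :
    ∃ I ξ, WhAdmissible (cycleH n) (rw (cycleH n) α x) (rw (cycleH n) α (x + 1)) I ξ ∧
      pathCost (cycleH n) h ξ I = h α + 2 * h ((1 - α) / 2) := by
  have : Fact (1 < n) := ⟨by omega⟩
  rw [rw_cycleH hn, rw_cycleH hn, add_sub_cancel_right]
  set β := (1 - α) / 2 with hβ
  have hβ0 : 0 ≤ β := by linarith [hα.2]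
  -- move `β` from `x - 1` to `x`, then `α` from `x` to `x + 1`, then `β` from `x + 1` to `x + 2`
  let ξ : ℕ → ZMod n → ℝ
    | 0 => Pi.single x α + Pi.single (x + 1) β + Pi.single (x - 1) β
    | 1 => Pi.single x (α + β) + Pi.single (x + 1) β
    | 2 => Pi.single x β + Pi.single (x + 1) (α + β)
    | _ => Pi.single (x + 1) α + Pi.single (x + 1 + 1) β + Pi.single x β
  let e : ℕ → ZMod n
    | 0 => x - 1
    | 1 => x
    | _ => x + 1
  let δ : ℕ → ℝ
    | 1 => α
    | _ => β
  have hmove : ∀ i < 3, ξ (i + 1) = ξ i - Pi.single (e i) (δ i) + Pi.single (e i + 1) (δ i) := by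
    intro i hi
    interval_cases i <;> simp only [ξ, e, δ, Pi.single_add, sub_add_cancel] <;> abel
  have hprob : ∀ i ≤ 3, IsProb (ξ i) := by
    intro i hi
    refine isProb_of_nonneg_of_sum_eq_one (fun v => ?_) ?_
    · interval_cases i <;> simp only [ξ, Pi.add_apply, Pi.single_apply] <;> split_ifs <;>
        linarith [hα.1]
    · interval_cases i <;> simp only [ξ, Pi.add_apply, Finset.sum_add_distrib,
        Finset.sum_pi_single', Finset.mem_univ, if_true] <;> linarith
  refine ⟨3, ξ, whAdmissible_of_moves hprob hmove, ?_⟩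
  rw [pathCost_eq_of_moves hprob hmove]
  simp only [Finset.sum_range_succ, Finset.sum_range_zero, δ, abs_of_nonneg hβ0,
    abs_of_nonneg hα.1]
  ring

theorem Wh_cycleH_rw_add_one (hc : CostFn h D0 D1) (hn : 6 ≤ n) {α : ℝ} (hα : α ∈ Icc (0 : ℝ) 1)
    (x : ZMod n) :
    Wh (cycleH n) h (rw (cycleH n) α x) (rw (cycleH n) α (x + 1)) = h α + 2 * h ((1 - α) / 2) := by
  have : Fact (1 < n) := ⟨by omega⟩
  obtain ⟨I, ξ, hξ, hcost⟩ := exists_whAdmissible_rw_cycleH (h := h) (by omega) hα x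
  refine le_antisymm (hcost ▸ Wh_le_pathCost hc hξ) ?_
  have hprob : IsProb (rw (cycleH n) α x) := hξ.1 ▸ hξ.2.2.1 0 (Nat.zero_le _)
  have h1 : x + 1 ≠ x - 1 := fun h =>
    ZMod.two_ne_zero_of_three_le (by omega : 3 ≤ n) (by linear_combination h)
  have h2 : x ≠ x - 1 := by simp [eq_sub_iff_add_eq]
  let S : Finset (ZMod n) := {x, x + 1, x - 1}
  have hS : ∀ a ∉ S, rw (cycleH n) α x a = 0 := fun a ha => by
    simp only [S, Finset.mem_insert, Finset.mem_singleton, not_or] at ha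
    simp [rw_cycleH (by omega : 3 ≤ n), ha.1, ha.2.1, ha.2.2]
  have hcard : 2 * S.card ≤ n := by
    have : S.card ≤ 3 := Finset.card_le_three
    omega
  have hsum : ∑ a, h (rw (cycleH n) α x a) = h α + 2 * h ((1 - α) / 2) := by
    rw [← Finset.sum_subset (Finset.subset_univ S) fun a _ ha => by rw [hS a ha, hc.zero],
      Finset.sum_insert (by simp [h2]), Finset.sum_insert (by simp [h1]), Finset.sum_singleton]
    simp only [rw_cycleH (by omega : 3 ≤ n), Pi.add_apply, Pi.single_eq_same, ne_eq,
      left_eq_add, one_ne_zero, not_false_eq_true, Pi.single_eq_of_ne, add_zero, h2, add_eq_left,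
      zero_add, h1, h2.symm, h1.symm, add_right_inj]
    ring
  refine hsum ▸ sum_le_Wh_of_rotate hc (fun a => ⟨hprob.1 a, hprob.le_one a⟩) hS hcard
    (fun v => ?_) ⟨I, ξ, hξ⟩
  simp [rw_cycleH (by omega : 3 ≤ n), Pi.single_apply, eq_sub_iff_add_eq]

theorem ORic_cycleH_of_adj (hc : CostFn h D0 D1)
    (hn : 6 ≤ n) {x y : ZMod n} (hxy : (cycleH n).Adj x y) {α : ℝ} (hα : α ∈ Icc (0 : ℝ) 1) :
    ORic (cycleH n) h α x y = 1 - (h α + 2 * h ((1 - α) / 2)) / h 1 := by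
  have : Fact (1 < n) := ⟨by omega⟩
  rcases cycleH_adj_iff.1 hxy with rfl | rfl
  · rw [ORic, Wh_cycleH_rw_add_one hc hn hα, Wh_cycleH_dirac_add_one hc]
  · have hrw := Wh_cycleH_rw_add_one hc hn hα (x - 1)
    have hdirac := Wh_cycleH_dirac_add_one hc (x - 1)
    rw [sub_add_cancel] at hrw hdirac
    rw [ORic, Wh_comm, hrw, Wh_comm, hdirac]

end CycleCurvature

/-- The `h`-LLY–Ricci curvature of the cycle `C_n`, `n ≥ 6`, on adjacent
vertices: it equals `(h'(1) − h'(0))/h(1)`, is nonpositive, and is negative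
whenever `h` is nonlinear. -/
theorem curvature_cycle_graph (n : ℕ) (hn : 6 ≤ n)
    (h : ℝ → ℝ) (D0 D1 : ℝ) (hc : CostFn h D0 D1)
    (x y : ZMod n) (hxy : (cycleH n).Adj x y) :
    hLLY (cycleH n) h x y = (D1 - D0) / h 1 ∧
    hLLY (cycleH n) h x y ≤ 0 ∧
    ((¬∀ t ∈ Set.Icc (0 : ℝ) 1, h t = h 1 * t) →
      hLLY (cycleH n) h x y < 0) := by
  have : NeZero n := ⟨by omega⟩
  have hLLY_eq : hLLY (cycleH n) h x y = (D1 - D0) / h 1 := by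
    refine Tendsto.liminf_eq (hc.tendsto_curvature_quotient.congr' ?_)
    filter_upwards [Ioo_mem_nhdsLT one_pos] with α hα
    rw [ORic_cycleH_of_adj hc hn hxy ⟨hα.1.le, hα.2.le⟩]
  refine ⟨hLLY_eq, ?_, fun hnonlin => ?_⟩
  · rw [hLLY_eq]
    exact div_nonpos_of_nonpos_of_nonneg (sub_nonpos.2 hc.D1_le_D0) hc.apply_one_pos.le
  · rw [hLLY_eq]
    refine div_neg_of_neg_of_pos (sub_neg.2 (lt_of_not_ge fun hD => ?_)) hc.apply_one_pos
    exact hnonlin (hc.eq_mul_of_D0_le_D1 hD)
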